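/- arXiv:2505.02264 — 4 statements merged into one kernel-verified Lean document; each statement's English description precedes it below -/
import Mathlib

section
/- Let C be a category admitting products indexed by I and by I × I, let G : P₂(I) ⥤ C be a functor, let L be an object of C and π_i : L ⟶ G(i) a morphism for each i ∈ I. Then the following are equivalent: (1) there is a limit cone over G with apex L whose component at the singleton {i} is π_i for every i ∈ I; (2) the diagram L ⟶ ∏_{i∈I} G(i) ⇉ ∏_{(i,j)∈I²} G(i,j) is an equalizer, where the first morphism is ⟨π_i⟩_{i∈I}, and where the two parallel morphisms have (i,j)-component G(𝔦_{i,j}) ∘ p_i and G(𝔦_{j,i}) ∘ p_j respectively (p_i denoting the product projection to G(i)). -/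
open CategoryTheory CategoryTheory.Limits Opposite

universe w v u

/-- The defining property of objects of the truncated power set category of order `2`:
nonempty subsets with at most two elements. -/
def P2Prop (I : Type w) : Set I → Prop :=
  fun S => S.Nonempty ∧ ∃ a b : I, S ⊆ ({a, b} : Set I)

/-- The truncated power set category of `I` of order `2`, i.e. the poset category of
subsets `S ⊆ I` with `1 ≤ |S| ≤ 2`, with a unique morphism `S ⟶ T` exactly when `S ⊆ T`. -/
abbrev P2 (I : Type w) := CategoryTheory.ObjectProperty.FullSubcategory (P2Prop I)

namespace P2

variable {I : Type w}

/-- The singleton `{i}` as an object of `P2 I`. -/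
def single (i : I) : P2 I :=
  ⟨{i}, Set.singleton_nonempty i, i, i, by simp⟩

/-- The pair `{i, j}` as an object of `P2 I`. -/
def pair (i j : I) : P2 I :=
  ⟨{i, j}, ⟨i, by simp⟩, i, j, le_refl _⟩

/-- The inclusion morphism `𝔦_{i,j} : {i} ⟶ {i, j}`. -/
def inclLeft (i j : I) : single i ⟶ pair i j :=
  ObjectProperty.homMk (homOfLE (by simp [single, pair]))

/-- The inclusion morphism `𝔦_{j,i} : {j} ⟶ {i, j}`. -/
def inclRight (i j : I) : single j ⟶ pair i j :=
  ObjectProperty.homMk (homOfLE (by simp [single, pair]))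

end P2

/-! A cone over `G` is the same as its singleton components `π i` subject to
`π i ≫ G(𝔦_{i,j}) = π j ≫ G(𝔦_{j,i})`: the component at `S` is recovered as
`π i ≫ G({i} ⟶ S)` for any `i ∈ S`, and this does not depend on `i`, because the
compatibility at `(i, j)` can be pushed forward along `{i, j} ⟶ S`. Hence cones over `G` and
forks of the two maps `∏ G(i) ⇉ ∏ G(i,j)` form equivalent categories, and an equivalence of
categories of cones preserves limit cones. -/

namespace P2

variable {I : Type w}

instance (S T : P2 I) : Subsingleton (S ⟶ T) :=
  ⟨fun _ _ => ObjectProperty.hom_ext _ (Subsingleton.elim _ _)⟩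

def homOfMem {i : I} {S : P2 I} (h : i ∈ S.obj) : single i ⟶ S :=
  ObjectProperty.homMk (homOfLE (Set.singleton_subset_iff.mpr h))

def pairHomOfMem {i j : I} {S : P2 I} (hi : i ∈ S.obj) (hj : j ∈ S.obj) : pair i j ⟶ S :=
  ObjectProperty.homMk (homOfLE (Set.insert_subset hi (Set.singleton_subset_iff.mpr hj)))

noncomputable def someMem (S : P2 I) : I := S.2.1.some

lemma someMem_mem (S : P2 I) : someMem S ∈ S.obj := S.2.1.some_mem

lemma mem_single (i : I) : i ∈ (single i).obj := rfl

variable {C : Type u} [Category.{v} C] (G : P2 I ⥤ C)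
  [HasProduct fun i : I => G.obj (single i)] [HasProduct fun p : I × I => G.obj (pair p.1 p.2)]

noncomputable def fstPiMap :
    (∏ᶜ fun i : I => G.obj (single i)) ⟶ ∏ᶜ fun p : I × I => G.obj (pair p.1 p.2) :=
  Pi.lift fun p => Pi.π _ p.1 ≫ G.map (inclLeft p.1 p.2)

noncomputable def sndPiMap :
    (∏ᶜ fun i : I => G.obj (single i)) ⟶ ∏ᶜ fun p : I × I => G.obj (pair p.1 p.2) :=
  Pi.lift fun p => Pi.π _ p.2 ≫ G.map (inclRight p.1 p.2)

@[simp]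
lemma fstPiMap_π (p : I × I) :
    fstPiMap G ≫ Pi.π _ p = Pi.π _ p.1 ≫ G.map (inclLeft p.1 p.2) :=
  Pi.lift_π _ _

@[simp]
lemma sndPiMap_π (p : I × I) :
    sndPiMap G ≫ Pi.π _ p = Pi.π _ p.2 ≫ G.map (inclRight p.1 p.2) :=
  Pi.lift_π _ _

variable {G}

lemma fork_ι_π_map_homOfMem (s : Fork (fstPiMap G) (sndPiMap G)) {S : P2 I} {i j : I}
    (hi : i ∈ S.obj) (hj : j ∈ S.obj) :
    s.ι ≫ Pi.π _ i ≫ G.map (homOfMem hi) = s.ι ≫ Pi.π _ j ≫ G.map (homOfMem hj) := by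
  have hl : homOfMem hi = inclLeft i j ≫ pairHomOfMem hi hj := Subsingleton.elim _ _
  have hr : homOfMem hj = inclRight i j ≫ pairHomOfMem hi hj := Subsingleton.elim _ _
  have h := s.condition =≫ Pi.π _ (i, j)
  simp only [Category.assoc, fstPiMap_π, sndPiMap_π] at h
  rw [hl, hr, G.map_comp, G.map_comp, reassoc_of% h]

noncomputable abbrev forkOfCone (c : Cone G) : Fork (fstPiMap G) (sndPiMap G) :=
  Fork.ofι (Pi.lift fun i => c.π.app (single i)) (Pi.hom_ext _ _ fun p => by simp [c.w])

@[simp]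
lemma forkOfCone_ι (c : Cone G) : (forkOfCone c).ι = Pi.lift fun i => c.π.app (single i) := rfl

noncomputable abbrev coneOfFork (s : Fork (fstPiMap G) (sndPiMap G)) : Cone G where
  pt := s.pt
  π :=
    { app := fun S => s.ι ≫ Pi.π _ (someMem S) ≫ G.map (homOfMem (someMem_mem S))
      naturality := fun S T g => by
        have hg : homOfMem (someMem_mem S) ≫ g = homOfMem (g.hom.le (someMem_mem S)) :=
          Subsingleton.elim _ _
        simpa [← G.map_comp, hg] using fork_ι_π_map_homOfMem s (someMem_mem T) _ }

lemma coneOfFork_π_app (s : Fork (fstPiMap G) (sndPiMap G)) {S : P2 I} {i : I}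
    (hi : i ∈ S.obj) : (coneOfFork s).π.app S = s.ι ≫ Pi.π _ i ≫ G.map (homOfMem hi) :=
  fork_ι_π_map_homOfMem s _ _

@[simp]
lemma coneOfFork_π_app_single (s : Fork (fstPiMap G) (sndPiMap G)) (i : I) :
    (coneOfFork s).π.app (single i) = s.ι ≫ Pi.π _ i := by
  rw [coneOfFork_π_app s (mem_single i), Subsingleton.elim (homOfMem _) (𝟙 _), G.map_id,
    Category.comp_id]

lemma coneOfFork_forkOfCone_π_app (c : Cone G) (S : P2 I) :
    (coneOfFork (forkOfCone c)).π.app S = c.π.app S := by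
  simp [c.w]

lemma forkOfCone_coneOfFork_ι (s : Fork (fstPiMap G) (sndPiMap G)) :
    (forkOfCone (coneOfFork s)).ι = s.ι :=
  Pi.hom_ext _ _ fun i => by rw [forkOfCone_ι, Pi.lift_π, coneOfFork_π_app_single]

variable (G)

noncomputable def coneToFork : Cone G ⥤ Fork (fstPiMap G) (sndPiMap G) where
  obj c := forkOfCone c
  map f := Fork.mkHom f.hom (Pi.hom_ext _ _ fun i => by simp)

noncomputable def forkToCone : Fork (fstPiMap G) (sndPiMap G) ⥤ Cone G where
  obj s := coneOfFork s
  map f := { hom := f.hom, w := fun S => by simp }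

noncomputable def coneEquivFork : Cone G ≌ Fork (fstPiMap G) (sndPiMap G) :=
  CategoryTheory.Equivalence.mk (coneToFork G) (forkToCone G)
    (NatIso.ofComponents
      (fun c => Cone.ext (Iso.refl _) fun S =>
        ((Category.id_comp _).trans (coneOfFork_forkOfCone_π_app c S)).symm)
      (fun f => by ext; exact (Category.comp_id _).trans (Category.id_comp _).symm))
    (NatIso.ofComponents
      (fun s => Fork.ext (Iso.refl _)
        ((Category.id_comp _).trans (forkOfCone_coneOfFork_ι s).symm))
      (fun f => by ext; exact (Category.comp_id _).trans (Category.id_comp _).symm))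

end P2

/-- For a functor `G : P₂(I) ⥤ C`, an object `L` and morphisms
`π i : L ⟶ G {i}`, having a limit cone over `G` with apex `L` whose singleton components are
the `π i` is equivalent to the diagram
`L ⟶ ∏_{i} G(i) ⇉ ∏_{(i,j)} G(i,j)` being an equalizer. -/
theorem gluing_iff_equalizer {I : Type w} {C : Type u} [Category.{v} C]
    (G : P2 I ⥤ C) (L : C) (π : ∀ i : I, L ⟶ G.obj (P2.single i))
    [HasProduct fun i : I => G.obj (P2.single i)]
    [HasProduct fun p : I × I => G.obj (P2.pair p.1 p.2)] :
    (∃ α : (Functor.const (P2 I)).obj L ⟶ G,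
        (∀ i : I, α.app (P2.single i) = π i) ∧
          Nonempty (IsLimit (Cone.mk L α))) ↔
      (∃ w : Pi.lift π ≫
            Pi.lift (fun p : I × I =>
              Pi.π (fun i : I => G.obj (P2.single i)) p.1 ≫ G.map (P2.inclLeft p.1 p.2)) =
          Pi.lift π ≫
            Pi.lift (fun p : I × I =>
              Pi.π (fun i : I => G.obj (P2.single i)) p.2 ≫ G.map (P2.inclRight p.1 p.2)),
        Nonempty (IsLimit (Fork.ofι (Pi.lift π) w))) := by
  constructor
  · rintro ⟨α, hα, ⟨hc⟩⟩
    obtain rfl : (fun i => α.app (P2.single i)) = π := funext hα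
    exact ⟨(P2.forkOfCone (Cone.mk L α)).condition,
      ⟨(IsLimit.ofConeEquiv (P2.coneEquivFork G)).symm hc⟩⟩
  · rintro ⟨w, ⟨hs⟩⟩
    refine ⟨(P2.coneOfFork (Fork.ofι (Pi.lift π) w)).π, fun i => ?_,
      ⟨(IsLimit.ofConeEquiv (P2.coneEquivFork G).symm).symm hs⟩⟩
    exact (P2.coneOfFork_π_app_single _ i).trans (Pi.lift_π π i)
end

section
/- Let F : P₂(I)ᵒᵖ ⥤ Top be a functor to topological spaces. Let Q_F be the quotient of the disjoint union Σ_{i∈I} F(i) by the equivalence relation generated by the relation R defined by: (i,x) R (j,y) iff there exists u ∈ F(i,j) with x = F(𝔦_{i,j}ᵒᵖ)(u) and y = F(𝔦_{j,i}ᵒᵖ)(u); equip Q_F with the final (coinduced) topology with respect to the family of canonical maps ι_i : F(i) → Q_F. Then: (a) (Q_F, (ι_i)) extends to a colimit cocone over F in Top; and (b) if moreover R is itself an equivalence relation and every structure map F(𝔦_{i,j}ᵒᵖ) : F(i,j) → F(i) is an open continuous map, then each canonical map ι_i : F(i) → Q_F is an open map. -/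
open CategoryTheory CategoryTheory.Limits Opposite

universe w v u

/-- The gluing relation on the disjoint union `Σ_{i∈I} F(i)`:
`(i,x) R (j,y)` iff there is `u ∈ F(i,j)` with `x = F(𝔦_{i,j}ᵒᵖ)(u)` and
`y = F(𝔦_{j,i}ᵒᵖ)(u)`. -/
def glueRelTop {I : Type w} (F : (P2 I)ᵒᵖ ⥤ TopCat.{w}) :
    (Σ i : I, F.obj (op (P2.single i))) → (Σ i : I, F.obj (op (P2.single i))) → Prop :=
  fun p q => ∃ u : F.obj (op (P2.pair p.1 q.1)),
    p.2 = F.map (P2.inclLeft p.1 q.1).op u ∧ q.2 = F.map (P2.inclRight p.1 q.1).op u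

/-- The underlying type of `Q_F`: the quotient of `Σ_{i∈I} F(i)` by the equivalence relation
generated by the gluing relation. -/
def gluedQuotTop {I : Type w} (F : (P2 I)ᵒᵖ ⥤ TopCat.{w}) : Type w :=
  Quot (glueRelTop F)

/-- `Q_F` carries the final (coinduced) topology with respect to the canonical maps
`ι_i : F(i) → Q_F`. -/
instance gluedQuotTop.topologicalSpace {I : Type w} (F : (P2 I)ᵒᵖ ⥤ TopCat.{w}) :
    TopologicalSpace (gluedQuotTop F) :=
  ⨆ i : I, TopologicalSpace.coinduced
    (fun x : F.obj (op (P2.single i)) => Quot.mk (glueRelTop F) ⟨i, x⟩) inferInstance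

/-- `Q_F` as an object of `Top`. -/
def gluedQuotTopCat {I : Type w} (F : (P2 I)ᵒᵖ ⥤ TopCat.{w}) : TopCat.{w} :=
  TopCat.of (gluedQuotTop F)

/-!
A cocone over `F` is determined by its legs at the singletons: the leg at `{i, j}` factors
through either of its restrictions to `F(i)` and `F(j)`, so the legs at singletons agree on
glued pairs, and conversely glued pairs get identified. This makes `Q_F`, with its final
topology, the colimit. When the gluing relation is already an equivalence relation, the
saturation of `ι_i(U)` seen in `F(j)` is `F(𝔦_{j,i}ᵒᵖ)(F(𝔦_{i,j}ᵒᵖ)⁻¹ U)`, which is open as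
soon as `F(𝔦_{j,i}ᵒᵖ)` is an open map.
-/

namespace P2

variable {I : Type w}

instance {S T : P2 I} : Subsingleton (S ⟶ T) :=
  ⟨fun _ _ => ObjectProperty.hom_ext _ (Subsingleton.elim _ _)⟩

def homOfSubset {S T : P2 I} (h : S.obj ⊆ T.obj) : S ⟶ T :=
  ObjectProperty.homMk (homOfLE h)

def singleHom {i : I} {S : P2 I} (h : i ∈ S.obj) : single i ⟶ S :=
  homOfSubset (Set.singleton_subset_iff.mpr h)

lemma pair_subset {i j : I} {S : P2 I} (hi : i ∈ S.obj) (hj : j ∈ S.obj) :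
    (pair i j).obj ⊆ S.obj := by
  rintro x (rfl | rfl) <;> assumption

end P2

namespace gluedQuotTop

open P2

variable {I : Type w} (F : (P2 I)ᵒᵖ ⥤ TopCat.{w})

lemma map_map_apply {S T U : P2 I} (f : S ⟶ T) (g : T ⟶ U) (h : S ⟶ U)
    (u : F.obj (op U)) : F.map f.op (F.map g.op u) = F.map h.op u := by
  rw [← ConcreteCategory.comp_apply, ← F.map_comp, ← op_comp, Subsingleton.elim (f ≫ g) h]

lemma map_apply_eq_self {S : P2 I} (f : S ⟶ S) (u : F.obj (op S)) : F.map f.op u = u := by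
  rw [Subsingleton.elim f (𝟙 S), op_id, F.map_id]
  rfl

/-- The canonical map `ι_i : F(i) → Q_F`. -/
def mk (i : I) (x : F.obj (op (single i))) : gluedQuotTop F :=
  Quot.mk (glueRelTop F) ⟨i, x⟩

lemma continuous_mk (i : I) : Continuous (mk F i) :=
  continuous_iff_coinduced_le.mpr
    (le_iSup (fun j => TopologicalSpace.coinduced (mk F j) inferInstance) i)

lemma isOpen_iff_forall_isOpen_preimage_mk {V : Set (gluedQuotTop F)} :
    IsOpen V ↔ ∀ j : I, IsOpen (mk F j ⁻¹' V) :=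
  isOpen_iSup_iff.trans (forall_congr' fun _ => isOpen_coinduced)

lemma mk_map_singleHom_eq {S : P2 I} {i j : I} (hi : i ∈ S.obj) (hj : j ∈ S.obj)
    (u : F.obj (op S)) :
    mk F i (F.map (singleHom hi).op u) = mk F j (F.map (singleHom hj).op u) :=
  Quot.sound ⟨F.map (homOfSubset (pair_subset hi hj)).op u,
    (map_map_apply F _ _ _ u).symm, (map_map_apply F _ _ _ u).symm⟩

/-- The leg at `S` goes through an arbitrarily chosen element of `S`. -/
noncomputable def ιApp (S : (P2 I)ᵒᵖ) : F.obj S ⟶ gluedQuotTopCat F :=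
  let hS := S.unop.property.1.some_mem
  TopCat.ofHom ⟨fun u => mk F _ (F.map (singleHom hS).op u),
    (continuous_mk F _).comp (F.map (singleHom hS).op).hom.continuous⟩

lemma ιApp_apply {S : (P2 I)ᵒᵖ} {i : I} (hi : i ∈ S.unop.obj) (u : F.obj S) :
    ιApp F S u = mk F i (F.map (singleHom hi).op u) :=
  mk_map_singleHom_eq F _ hi u

lemma ιApp_single (i : I) (x : F.obj (op (single i))) :
    ιApp F (op (single i)) x = mk F i x :=
  (ιApp_apply F (S := op (single i)) (Set.mem_singleton i) x).trans
    (congrArg (mk F i) (map_apply_eq_self F _ x))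

noncomputable def ι : F ⟶ (Functor.const (P2 I)ᵒᵖ).obj (gluedQuotTopCat F) where
  app := ιApp F
  naturality S T f := by
    ext u
    obtain ⟨i, hi⟩ := T.unop.property.1
    change ιApp F T (F.map f.unop.op u) = ιApp F S u
    rw [ιApp_apply F hi, ιApp_apply F (leOfHom f.unop.hom hi), map_map_apply]

noncomputable def desc (s : Cocone F) : gluedQuotTopCat F ⟶ s.pt :=
  TopCat.ofHom
    { toFun := Quot.lift (fun p => s.ι.app (op (single p.1)) p.2) <| by
        rintro ⟨i, x⟩ ⟨j, y⟩ ⟨u, hx, hy⟩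
        dsimp only at hx hy ⊢
        rw [hx, hy]
        exact (s.w_apply (inclLeft i j).op u).trans (s.w_apply (inclRight i j).op u).symm
      continuous_toFun := continuous_iSup_dom.mpr fun i =>
        continuous_coinduced_dom.mpr (s.ι.app (op (single i))).hom.continuous }

lemma desc_mk (s : Cocone F) (i : I) (x : F.obj (op (single i))) :
    desc F s (mk F i x) = s.ι.app (op (single i)) x :=
  rfl

noncomputable def isColimit : IsColimit (Cocone.mk (gluedQuotTopCat F) (ι F)) where
  desc := desc F
  fac s S := by
    ext u
    change desc F s (ιApp F S u) = s.ι.app S u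
    rw [ιApp_apply F S.unop.property.1.some_mem, desc_mk, s.w_apply]
  uniq s m hm := by
    ext q
    induction q using Quot.ind with
    | mk p =>
      obtain ⟨i, x⟩ := p
      change m (mk F i x) = desc F s (mk F i x)
      rw [desc_mk, ← ιApp_single, ← ConcreteCategory.congr_hom (hm (op (single i))) x]
      rfl

section OpenMaps

variable {F}

/-- `IsOpenMap fun x => (Quot.mk _ ⟨i, x⟩ : gluedQuotTop F)` elaborates with the quotient
topology of `Quot`, coinduced from the sigma type; it agrees with that of `gluedQuotTop F`. -/
lemma topologicalSpace_eq_quot :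
    (gluedQuotTop.topologicalSpace F : TopologicalSpace (Quot (glueRelTop F))) =
      instTopologicalSpaceQuot := by
  ext V
  rw [isOpen_iSup_iff]
  change _ ↔ IsOpen (Quot.mk (glueRelTop F) ⁻¹' V)
  rw [isOpen_iSup_iff]
  rfl

lemma mk_eq_mk_iff (hR : Equivalence (glueRelTop F)) {i j : I} {x : F.obj (op (single i))}
    {y : F.obj (op (single j))} : mk F i x = mk F j y ↔ glueRelTop F ⟨i, x⟩ ⟨j, y⟩ :=
  Quot.eq.trans hR.eqvGen_iff

lemma preimage_mk_image_mk (hR : Equivalence (glueRelTop F)) (i j : I)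
    (U : Set (F.obj (op (single i)))) :
    mk F j ⁻¹' (mk F i '' U) =
      F.map (inclLeft j i).op '' (F.map (inclRight j i).op ⁻¹' U) := by
  ext y
  constructor
  · rintro ⟨x, hx, hxy⟩
    obtain ⟨u, hy, hx'⟩ := (mk_eq_mk_iff hR).mp hxy.symm
    exact ⟨u, (congrArg (· ∈ U) hx').mp hx, hy.symm⟩
  · rintro ⟨u, hu, rfl⟩
    exact ⟨_, hu, ((mk_eq_mk_iff hR).mpr ⟨u, rfl, rfl⟩).symm⟩

lemma isOpenMap_mk (hR : Equivalence (glueRelTop F))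
    (hL : ∀ i j : I, IsOpenMap (F.map (inclLeft i j).op)) (i : I) : IsOpenMap (mk F i) :=
  fun U hU => (isOpen_iff_forall_isOpen_preimage_mk F).mpr fun j => by
    rw [preimage_mk_image_mk hR]
    exact hL j i _ (hU.preimage (F.map (inclRight j i).op).hom.continuous)

end OpenMaps

end gluedQuotTop

/-- (a) `(Q_F, (ι_i))` extends to a colimit cocone over `F` in `Top`;
(b) if the gluing relation is already an equivalence relation and all structure maps
`F(𝔦ᵒᵖ) : F(i,j) → F(i)` are open (continuous) maps, then each `ι_i` is an open map. -/
theorem gluedQuotTopCat_isColimit_and_openMaps {I : Type w} (F : (P2 I)ᵒᵖ ⥤ TopCat.{w}) :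
    (∃ α : F ⟶ (Functor.const (P2 I)ᵒᵖ).obj (gluedQuotTopCat F),
        (∀ (i : I) (x : F.obj (op (P2.single i))),
          α.app (op (P2.single i)) x = Quot.mk (glueRelTop F) ⟨i, x⟩) ∧
        Nonempty (IsColimit (Cocone.mk (gluedQuotTopCat F) α))) ∧
    ((Equivalence (glueRelTop F) ∧
        (∀ i j : I, IsOpenMap (F.map (P2.inclLeft i j).op)) ∧
        (∀ i j : I, IsOpenMap (F.map (P2.inclRight i j).op))) →
      ∀ i : I, IsOpenMap
        (fun x : F.obj (op (P2.single i)) =>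
          (Quot.mk (glueRelTop F) ⟨i, x⟩ : gluedQuotTop F))) := by
  refine ⟨⟨gluedQuotTop.ι F, gluedQuotTop.ιApp_single F,
    ⟨gluedQuotTop.isColimit F⟩⟩, ?_⟩
  rintro ⟨hR, hL, -⟩ i
  rw [← gluedQuotTop.topologicalSpace_eq_quot]
  exact gluedQuotTop.isOpenMap_mk hR hL i
end

section
/- Let C be a locally small category with pullbacks. Let (ι_i : U_i ⟶ U)_{i∈I} be a universal effective epimorphism, and for each i ∈ I let (ℓ_{ij} : V_{ij} ⟶ U_i)_{j∈J_i} be a universal effective epimorphism. Then the composite family (ι_i ∘ ℓ_{ij} : V_{ij} ⟶ U)_{(i,j), i∈I, j∈J_i} is a universal effective epimorphism. -/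
/-!
Compatibility of a family is conveniently tested against arbitrary pairs of arrows `a, b` with
`a ≫ ι i = b ≫ ι j` instead of the pullback projections. Given a compatible family `f_{ij}` on
the composite cover, each `ℓ_i` yields a unique `g_i : X_i ⟶ Z` with `ℓ_{ij} ≫ g_i = f_{ij}`.
The `g_i` are compatible: pulling back the universal families `ℓ_i` and `ℓ_{i'}` along `a` and
`b` turns `a ≫ g_i = b ≫ g_{i'}` into equations between components of `f`. Hence the `g_i`
descend to `U`. Universality follows because the base change of the composite along
`f : W ⟶ U` is, up to the pasting isomorphisms for pullbacks, the composite of the base changes.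
-/

open CategoryTheory CategoryTheory.Limits Opposite

universe w w' v u

/-- A family of morphisms `(ι_i : X_i ⟶ U)` is an effective epimorphism if for every object
`Z` the diagram of sets `Hom(U,Z) ⟶ ∏_i Hom(X_i,Z) ⇉ ∏_{(i,j)} Hom(X_i ×_U X_j, Z)` is an
equalizer; concretely, every family `(f_i)` satisfying `pr₁ ≫ f_i = pr₂ ≫ f_j` for all
`i, j` factors uniquely through `U`. -/
def IsEffectiveEpiFamilyHom {C : Type u} [Category.{v} C] [HasPullbacks C] {I : Type w}
    {U : C} (X : I → C) (ι : ∀ i, X i ⟶ U) : Prop :=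
  ∀ (Z : C) (f : ∀ i, X i ⟶ Z),
    (∀ i j, pullback.fst (ι i) (ι j) ≫ f i = pullback.snd (ι i) (ι j) ≫ f j) →
      ∃! g : U ⟶ Z, ∀ i, ι i ≫ g = f i

/-- A family `(ι_i : X_i ⟶ U)` is a universal effective epimorphism if for every morphism
`f : V ⟶ U` the pulled-back family `(pr₂ : X_i ×_U V ⟶ V)` is an effective epimorphism. -/
def IsUniversalEffectiveEpiFamilyHom {C : Type u} [Category.{v} C] [HasPullbacks C]
    {I : Type w} {U : C} (X : I → C) (ι : ∀ i, X i ⟶ U) : Prop :=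
  ∀ (V : C) (f : V ⟶ U),
    IsEffectiveEpiFamilyHom (fun i => pullback (ι i) f) (fun i => pullback.snd (ι i) f)

section

variable {C : Type u} [Category.{v} C] [HasPullbacks C] {I : Type w} {U : C} {X : I → C}
  {ι : ∀ i, X i ⟶ U}

theorem isEffectiveEpiFamilyHom_iff :
    IsEffectiveEpiFamilyHom X ι ↔ ∀ (Z : C) (f : ∀ i, X i ⟶ Z),
      (∀ i j (T : C) (a : T ⟶ X i) (b : T ⟶ X j), a ≫ ι i = b ≫ ι j → a ≫ f i = b ≫ f j) →
        ∃! g : U ⟶ Z, ∀ i, ι i ≫ g = f i := by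
  refine forall₂_congr fun Z f => imp_congr_left ⟨fun hf i j T a b hab => ?_, fun hf i j =>
    hf i j _ _ _ pullback.condition⟩
  simpa only [pullback.lift_fst_assoc, pullback.lift_snd_assoc] using
    congrArg (pullback.lift a b hab ≫ ·) (hf i j)

namespace IsEffectiveEpiFamilyHom

theorem hom_ext (h : IsEffectiveEpiFamilyHom X ι) {Z : C} {u v : U ⟶ Z}
    (huv : ∀ i, ι i ≫ u = ι i ≫ v) : u = v := by
  obtain ⟨g, -, hg⟩ := h Z (fun i => ι i ≫ u) fun i j => pullback.condition_assoc u
  exact (hg u fun _ => rfl).trans (hg v fun i => (huv i).symm).symm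

theorem of_iso {X' : I → C} {ι' : ∀ i, X' i ⟶ U}
    (h : IsEffectiveEpiFamilyHom X ι) (e : ∀ i, X i ≅ X' i) (he : ∀ i, (e i).hom ≫ ι' i = ι i) :
    IsEffectiveEpiFamilyHom X' ι' := by
  have he' : ∀ i, (e i).inv ≫ ι i = ι' i := fun i => by rw [← he, Iso.inv_hom_id_assoc]
  rw [isEffectiveEpiFamilyHom_iff] at h ⊢
  intro Z f hf
  obtain ⟨g, hg, hg_unique⟩ := h Z (fun i => (e i).hom ≫ f i) fun i j T a b hab =>
    by simpa only [Category.assoc] using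
      hf i j T (a ≫ (e i).hom) (b ≫ (e j).hom) (by simp only [Category.assoc, he, hab])
  refine ⟨g, fun i => ?_, fun g' hg' => hg_unique g' fun i => ?_⟩
  · rw [← he', Category.assoc, hg, Iso.inv_hom_id_assoc]
  · rw [← he, Category.assoc, hg']

end IsEffectiveEpiFamilyHom

namespace IsUniversalEffectiveEpiFamilyHom

theorem isEffectiveEpiFamilyHom (h : IsUniversalEffectiveEpiFamilyHom X ι) :
    IsEffectiveEpiFamilyHom X ι :=
  (h U (𝟙 U)).of_iso (fun i => asIso (pullback.fst (ι i) (𝟙 U))) fun i => by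
    simp [pullback.condition]

theorem hom_ext (h : IsUniversalEffectiveEpiFamilyHom X ι) {T Z : C} (a : T ⟶ U)
    {u v : T ⟶ Z} (huv : ∀ i, pullback.snd (ι i) a ≫ u = pullback.snd (ι i) a ≫ v) : u = v :=
  (h T a).hom_ext huv

theorem pullback (h : IsUniversalEffectiveEpiFamilyHom X ι) {W : C} (f : W ⟶ U) :
    IsUniversalEffectiveEpiFamilyHom (fun i => pullback (ι i) f)
      (fun i => pullback.snd (ι i) f) := fun T g =>
  (h T (g ≫ f)).of_iso (fun i => (pullbackLeftPullbackSndIso (ι i) f g).symm) fun i =>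
    by simp

end IsUniversalEffectiveEpiFamilyHom

variable {J : I → Type w'} {V : ∀ i, J i → C}
  {ℓ : ∀ i (j : J i), V i j ⟶ X i}

theorem IsEffectiveEpiFamilyHom.comp (hι : IsEffectiveEpiFamilyHom X ι)
    (hℓ : ∀ i, IsUniversalEffectiveEpiFamilyHom (V i) (ℓ i)) :
    IsEffectiveEpiFamilyHom (fun p : Σ i, J i => V p.1 p.2) (fun p => ℓ p.1 p.2 ≫ ι p.1) := by
  rw [isEffectiveEpiFamilyHom_iff] at hι ⊢
  intro Z f hf
  have hg : ∀ i, ∃! g : X i ⟶ Z, ∀ j, ℓ i j ≫ g = f ⟨i, j⟩ := fun i =>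
    isEffectiveEpiFamilyHom_iff.1 (hℓ i).isEffectiveEpiFamilyHom Z (fun j => f ⟨i, j⟩)
      fun j j' T a b hab => hf ⟨i, j⟩ ⟨i, j'⟩ T a b (by simp only [reassoc_of% hab])
  choose g hg hg_unique using hg
  have hfg : ∀ i j i' (T : C) (a : T ⟶ V i j) (b : T ⟶ X i'),
      a ≫ ℓ i j ≫ ι i = b ≫ ι i' → a ≫ f ⟨i, j⟩ = b ≫ g i' := by
    intro i j i' T a b hab
    refine (hℓ i').hom_ext b fun k => ?_
    rw [← pullback.condition_assoc, hg, ← Category.assoc]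
    exact hf ⟨i, j⟩ ⟨i', k⟩ _ (pullback.snd (ℓ i' k) b ≫ a) (pullback.fst (ℓ i' k) b)
      (by simp only [Category.assoc, hab, pullback.condition_assoc])
  have hg_compat : ∀ i i' (T : C) (a : T ⟶ X i) (b : T ⟶ X i'),
      a ≫ ι i = b ≫ ι i' → a ≫ g i = b ≫ g i' := by
    intro i i' T a b hab
    refine (hℓ i).hom_ext a fun j => ?_
    rw [← pullback.condition_assoc, hg, ← Category.assoc]
    exact hfg i j i' _ (pullback.fst (ℓ i j) a) (pullback.snd (ℓ i j) a ≫ b)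
      (by simp only [Category.assoc, hab, pullback.condition_assoc])
  obtain ⟨G, hG, hG_unique⟩ := hι Z g hg_compat
  refine ⟨G, fun p => by simp only [Category.assoc, hG, hg], fun G' hG' => ?_⟩
  exact hG_unique G' fun i => hg_unique i _ fun j => by simpa using hG' ⟨i, j⟩

end

/-- The composition of universal effective epimorphisms is a universal
effective epimorphism. -/
theorem isUniversalEffectiveEpiFamilyHom_comp {C : Type u} [Category.{v} C] [HasPullbacks C]
    {I : Type w} {U : C} {X : I → C} {ι : ∀ i, X i ⟶ U}
    {J : I → Type w'} {V : ∀ i, J i → C} {ℓ : ∀ i (j : J i), V i j ⟶ X i}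
    (hι : IsUniversalEffectiveEpiFamilyHom X ι)
    (hℓ : ∀ i, IsUniversalEffectiveEpiFamilyHom (V i) (ℓ i)) :
    IsUniversalEffectiveEpiFamilyHom (fun p : Σ i, J i => V p.1 p.2)
      (fun p => ℓ p.1 p.2 ≫ ι p.1) := by
  intro W f
  have hcomp := (hι W f).comp fun i => (hℓ i).pullback (pullback.fst (ι i) f)
  exact hcomp.of_iso (fun p => pullbackRightPullbackFstIso (ι p.1) f (ℓ p.1 p.2)) fun p =>
    pullbackRightPullbackFstIso_hom_snd _ _ _
end

section
/- Given gluing data of sets of type I, the following are equivalent: (A) the relation R is an equivalence relation on Σ_{i∈I} X_i and every map f_{i,j} is injective; (B) every canonical map ι_i : X_i → Q is injective, every f_{i,j} is injective, and for all i, j ∈ I the image ι_i(f_{i,j}(X_{i,j})) equals the intersection (range ι_i) ∩ (range ι_j) in Q. -/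
/-!
Injectivity of the `f i j` occurs on both sides; what remains of either side says that `R` is
exact: `ι i x = ι j y` already forces `(i, x) R (j, y)`. Since `f i i` and `τ i i` are identities
and `τ` is an involution, `R` is always reflexive and symmetric, so it is an equivalence exactly
when it is exact. Given exactness, `R` relates `(i, x)` to some `(j, y)` exactly when
`x ∈ f i j (X i j)`, and relates `(i, x)` to `(i, y)` only when `x = y`. Conversely, if
`ι i x = ι j y` then `ι i x` lies in `range ι i ∩ range ι j`, hence is `ι i (f i j u)`, and
injectivity of `ι i` and `ι j` makes `u` a witness of `(i, x) R (j, y)`.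
-/

universe u

/-- Gluing data of sets of type `I`: types `X i`, overlap types `Xp i j` with `Xp i i = X i`,
maps `f i j : Xp i j → X i` with `f i i = id`, and transition bijections
`τ i j : Xp i j → Xp j i` with `τ j i ∘ τ i j = id` and `τ i i = id`. -/
structure SetGluingData (I : Type u) where
  /-- the sets being glued -/
  X : I → Type u
  /-- the overlap sets -/
  Xp : I → I → Type u
  /-- the inclusion of the overlaps -/
  f : ∀ i j, Xp i j → X i
  /-- the transition maps -/
  τ : ∀ i j, Xp i j → Xp j i
  diag : ∀ i, Xp i i = X i
  f_diag : ∀ i (u : Xp i i), f i i u = cast (diag i) u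
  τ_invol : ∀ i j (u : Xp i j), τ j i (τ i j u) = u
  τ_diag : ∀ i (u : Xp i i), τ i i u = u

namespace SetGluingData

variable {I : Type u} (D : SetGluingData I)

/-- The gluing relation on the disjoint union `Σ_{i∈I} X_i`: `(i,x) R (j,y)` iff there is
`u ∈ X_{i,j}` with `x = f_{i,j}(u)` and `y = f_{j,i}(τ_{i,j}(u))`. -/
def R : (Σ i, D.X i) → (Σ i, D.X i) → Prop :=
  fun p q => ∃ u : D.Xp p.1 q.1,
    p.2 = D.f p.1 q.1 u ∧ q.2 = D.f q.1 p.1 (D.τ p.1 q.1 u)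

/-- The glued set: the quotient of `Σ_{i∈I} X_i` by the equivalence relation generated by
the gluing relation. -/
def Q : Type u := Quot D.R

/-- The canonical map `ι_i : X_i → Q`. -/
def ι (i : I) : D.X i → D.Q := fun x => Quot.mk D.R ⟨i, x⟩

theorem R_refl (p : Σ i, D.X i) : D.R p p :=
  ⟨cast (D.diag p.1).symm p.2, by simp [D.f_diag], by simp [D.τ_diag, D.f_diag]⟩

theorem R_symm {p q : Σ i, D.X i} : D.R p q → D.R q p := fun ⟨u, hp, hq⟩ =>
  ⟨D.τ p.1 q.1 u, hq, by rw [D.τ_invol]; exact hp⟩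

theorem ι_f_eq_ι_f_τ (i j : I) (u : D.Xp i j) :
    D.ι i (D.f i j u) = D.ι j (D.f j i (D.τ i j u)) :=
  Quot.sound ⟨u, rfl, rfl⟩

def IsExact : Prop :=
  ∀ i j (x : D.X i) (y : D.X j), D.ι i x = D.ι j y → D.R ⟨i, x⟩ ⟨j, y⟩

theorem equivalence_R_iff_isExact : Equivalence D.R ↔ D.IsExact := by
  refine ⟨fun h i j x y hxy => h.eqvGen_iff.mp (Quot.eq.mp hxy), fun h => ⟨D.R_refl, D.R_symm, ?_⟩⟩
  rintro ⟨i, x⟩ ⟨j, y⟩ ⟨k, z⟩ hxy hyz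
  exact h i k x z ((Quot.sound hxy).trans (Quot.sound hyz))

section

variable {D}

theorem IsExact.ι_injective (hR : D.IsExact) (i : I) : Function.Injective (D.ι i) :=
  fun x y hxy => by
    obtain ⟨u, hx, hy⟩ := hR i i x y hxy
    rw [D.τ_diag, ← hx] at hy
    exact hy.symm

theorem IsExact.image_range_f_eq_inter (hR : D.IsExact) (i j : I) :
    D.ι i '' Set.range (D.f i j) = Set.range (D.ι i) ∩ Set.range (D.ι j) := by
  ext q
  constructor
  · rintro ⟨x, ⟨u, rfl⟩, rfl⟩
    exact ⟨⟨_, rfl⟩, ⟨_, (D.ι_f_eq_ι_f_τ i j u).symm⟩⟩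
  · rintro ⟨⟨x, rfl⟩, ⟨y, hy⟩⟩
    obtain ⟨u, hx, -⟩ := hR i j x y hy.symm
    exact ⟨x, ⟨u, hx.symm⟩, rfl⟩

theorem isExact_of_ι_injective_of_image_eq_inter (hι : ∀ i, Function.Injective (D.ι i))
    (him : ∀ i j, D.ι i '' Set.range (D.f i j) = Set.range (D.ι i) ∩ Set.range (D.ι j)) :
    D.IsExact := by
  intro i j x y hxy
  obtain ⟨_, ⟨u, rfl⟩, hu⟩ : D.ι i x ∈ D.ι i '' Set.range (D.f i j) := by
    rw [him i j]
    exact ⟨⟨x, rfl⟩, ⟨y, hxy.symm⟩⟩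
  refine ⟨u, (hι i hu).symm, hι j ?_⟩
  rw [← hxy, ← hu, D.ι_f_eq_ι_f_τ]

end

/-- For gluing data of sets, the gluing relation is an equivalence relation
with all `f_{i,j}` injective if and only if the canonical maps `ι_i` are injective, the
`f_{i,j}` are injective, and `ι_i (f_{i,j}(X_{i,j})) = range ι_i ∩ range ι_j` for all `i, j`. -/
theorem equivalence_iff_images_are_intersections :
    (Equivalence D.R ∧ ∀ i j, Function.Injective (D.f i j)) ↔
      ((∀ i, Function.Injective (D.ι i)) ∧ (∀ i j, Function.Injective (D.f i j)) ∧
        ∀ i j, D.ι i '' Set.range (D.f i j) = Set.range (D.ι i) ∩ Set.range (D.ι j)) := by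
  rw [equivalence_R_iff_isExact]
  constructor
  · rintro ⟨hR, hf⟩
    exact ⟨hR.ι_injective, hf, hR.image_range_f_eq_inter⟩
  · rintro ⟨hι, hf, him⟩
    exact ⟨isExact_of_ι_injective_of_image_eq_inter hι him, hf⟩

end SetGluingData
end
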